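/- Let f : ℝ^d → ℝ be twice continuously differentiable with a global minimizer x*, let γ > 0 and c > 0, and suppose there exist constants a > 0 and b > 0 such that for all x ∈ ℝ^d, a·(f(x) − f(x*)) + b·‖x − x*‖² ≤ ⟨x − x*, ∇f(x) − ∇f(x*)⟩. Then for any initial condition (x₀, p₀) ∈ ℝ^d × ℝ^d and any solution (x(t), p(t)) of the CD dynamics on [0, ∞) with this initial condition, there exist κ > 0 and C ≥ 0 such that for all t ≥ 0, f(x(t)) − f(x*) + ‖p(t)‖ ≤ C·e^{−κt}. -/

import Mathlib

/-!
Along the CD flow the energy `f x - f x⋆ + ‖p‖²/2` is non-increasing, so `‖p‖ ≤ M` for all time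
and the cubic damping is at most linear, `‖[p]³‖ ≤ M²‖p‖`. Adding the cross term
`ε⟪x - x⋆, p⟫ + ε(γ+1)/2 ‖x - x⋆‖²` for small `ε` gives a Lyapunov function `V` comparable to
`f x - f x⋆ + ‖p‖² + ‖x - x⋆‖²`; the growth condition on `∇f` turns the cross term's derivative into
`-ε(a(f x - f x⋆) + b‖x - x⋆‖²)` up to terms absorbed by the damping `-γ‖p‖²`, so `V' ≤ -κV` and
`V` decays exponentially. Finally `f x - f x⋆ + ‖p‖²/4 ≤ V`.
-/

open RealInnerProductSpace

/-- Componentwise cube of a vector in `ℝ^d`. -/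
noncomputable def cwCube {d : ℕ} (a : EuclideanSpace ℝ (Fin d)) :
    EuclideanSpace ℝ (Fin d) := WithLp.toLp 2 (fun i : Fin d => a i ^ 3)

theorem real_inner_cwCube_nonneg {d : ℕ} (v : EuclideanSpace ℝ (Fin d)) :
    0 ≤ ⟪v, cwCube v⟫ := by
  simp only [PiLp.inner_apply, cwCube, RCLike.inner_apply, conj_trivial]
  exact Finset.sum_nonneg fun i _ => by nlinarith [sq_nonneg (v i ^ 2)]

theorem norm_cwCube_le {d : ℕ} (v : EuclideanSpace ℝ (Fin d)) : ‖cwCube v‖ ≤ ‖v‖ ^ 3 := by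
  have hcoord : ∀ i, v i ^ 2 ≤ ‖v‖ ^ 2 := fun i => by
    rw [EuclideanSpace.real_norm_sq_eq]
    exact Finset.single_le_sum (fun j _ => sq_nonneg (v j)) (Finset.mem_univ i)
  refine (pow_le_pow_iff_left₀ (norm_nonneg _) (by positivity) two_ne_zero).1 ?_
  calc ‖cwCube v‖ ^ 2 = ∑ i, v i ^ 2 * (v i ^ 2) ^ 2 := by
        simp only [EuclideanSpace.real_norm_sq_eq, cwCube]; ring_nf
    _ ≤ ∑ i, v i ^ 2 * (‖v‖ ^ 2) ^ 2 :=
        Finset.sum_le_sum fun i _ => mul_le_mul_of_nonneg_left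
          (pow_le_pow_left₀ (sq_nonneg _) (hcoord i) 2) (sq_nonneg _)
    _ = (‖v‖ ^ 3) ^ 2 := by rw [← Finset.sum_mul, ← EuclideanSpace.real_norm_sq_eq]; ring

theorem le_mul_exp_of_hasDerivAt_add_mul_nonpos {V V' : ℝ → ℝ} {κ : ℝ}
    (hV : ∀ t, 0 ≤ t → HasDerivAt V (V' t) t) (hle : ∀ t, 0 ≤ t → V' t + κ * V t ≤ 0)
    {t : ℝ} (ht : 0 ≤ t) : V t ≤ V 0 * Real.exp (-κ * t) := by
  have hG : ∀ s, 0 ≤ s → HasDerivAt (fun s => V s * Real.exp (κ * s))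
      ((V' s + κ * V s) * Real.exp (κ * s)) s := fun s hs => by
    have hexp : HasDerivAt (fun s => Real.exp (κ * s)) (Real.exp (κ * s) * κ) s := by
      simpa using ((hasDerivAt_id s).const_mul κ).exp
    have hprod : HasDerivAt (fun s => V s * Real.exp (κ * s)) _ s := (hV s hs).mul hexp
    convert hprod using 1
    ring
  have hanti : AntitoneOn (fun s => V s * Real.exp (κ * s)) (Set.Ici 0) :=
    antitoneOn_of_hasDerivWithinAt_nonpos (convex_Ici 0)
      (fun s hs => (hG s hs).continuousAt.continuousWithinAt)
      (fun s hs => (hG s (interior_subset hs)).hasDerivWithinAt)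
      (fun s hs => mul_nonpos_of_nonpos_of_nonneg (hle s (interior_subset hs))
        (Real.exp_pos _).le)
  have h := hanti Set.self_mem_Ici ht ht
  simp only [mul_zero, Real.exp_zero, mul_one] at h
  rwa [neg_mul, Real.exp_neg, ← div_eq_mul_inv, le_div_iff₀ (Real.exp_pos _)]

theorem add_le_mul_of_add_sq_div_four_le {F P V e : ℝ} (hF : 0 ≤ F) (he : 0 < e) (he1 : e ≤ 1)
    (h : F + P ^ 2 / 4 ≤ V * e ^ 2) : F + P ≤ (V + 1) * e := by
  have hFe : F * e ≤ F := mul_le_of_le_one_right hF he1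
  have hPe : P * e ≤ P ^ 2 / 4 + e ^ 2 := by nlinarith [sq_nonneg (P / 2 - e)]
  refine le_of_mul_le_mul_right ?_ he
  nlinarith

theorem exists_cd_parameters {γ a b K : ℝ} (hγ : 0 < γ) (ha : 0 < a) (hb : 0 < b) (hK : 0 < K) :
    ∃ ε κ : ℝ, 0 < ε ∧ ε ≤ 1 / 2 ∧ ε * K ≤ γ / 2 ∧
      0 < κ ∧ κ ≤ ε * a ∧ κ ≤ γ / 2 ∧ κ * (γ + 2) ≤ b := by
  refine ⟨min (1 / 2) (γ / (2 * K)),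
    min (min (1 / 2) (γ / (2 * K)) * a) (min (γ / 2) (b / (γ + 2))), by positivity,
    min_le_left _ _, ?_, by positivity, min_le_left _ _,
    (min_le_right _ _).trans (min_le_left _ _), ?_⟩
  · calc min (1 / 2) (γ / (2 * K)) * K ≤ γ / (2 * K) * K := by gcongr; exact min_le_right _ _
      _ = γ / 2 := by field_simp
  · rw [← le_div_iff₀ (by positivity)]
    exact (min_le_right _ _).trans (min_le_right _ _)

section Lyapunov

variable {E : Type*} [NormedAddCommGroup E] [InnerProductSpace ℝ E]

/-- At `ε = 0` this is the mechanical energy. -/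
noncomputable def cdLyapunov (f : E → ℝ) (xstar : E) (γ ε : ℝ) (x p : E) : ℝ :=
  f x - f xstar + ‖p‖ ^ 2 / 2 + ε * ⟪x - xstar, p⟫ + ε * (γ + 1) / 2 * ‖x - xstar‖ ^ 2

theorem add_sq_div_four_le_cdLyapunov (f : E → ℝ) (xstar x p : E) {γ ε : ℝ} (hγ : 0 ≤ γ)
    (hε : 0 ≤ ε) (hε' : ε ≤ 1 / 2) :
    f x - f xstar + ‖p‖ ^ 2 / 4 ≤ cdLyapunov f xstar γ ε x p := by
  have hcross : -⟪x - xstar, p⟫ ≤ (‖x - xstar‖ ^ 2 + ‖p‖ ^ 2) / 2 := by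
    nlinarith [neg_le_of_abs_le (abs_real_inner_le_norm (x - xstar) p),
      two_mul_le_add_sq ‖x - xstar‖ ‖p‖]
  unfold cdLyapunov
  nlinarith [mul_le_mul_of_nonneg_left hcross hε, mul_nonneg hε hγ, sq_nonneg ‖x - xstar‖,
    sq_nonneg ‖p‖]

theorem cdLyapunov_le (f : E → ℝ) (xstar x p : E) {γ ε : ℝ} (hε : 0 ≤ ε) (hε' : ε ≤ 1) :
    cdLyapunov f xstar γ ε x p ≤
      f x - f xstar + ‖p‖ ^ 2 + ε * (γ + 2) / 2 * ‖x - xstar‖ ^ 2 := by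
  have hcross : ⟪x - xstar, p⟫ ≤ (‖x - xstar‖ ^ 2 + ‖p‖ ^ 2) / 2 := by
    nlinarith [real_inner_le_norm (x - xstar) p, two_mul_le_add_sq ‖x - xstar‖ ‖p‖]
  unfold cdLyapunov
  nlinarith [mul_le_mul_of_nonneg_left hcross hε, sq_nonneg ‖p‖]

variable [CompleteSpace E]

/-- The derivative of `cdLyapunov` along `ẋ = p`, `ṗ = -∇f(x) - γp - c q`, where `q` is the
damping vector (`[p]³` for the CD dynamics). -/
noncomputable def cdLyapunovDeriv (f : E → ℝ) (xstar : E) (γ c ε : ℝ) (x p q : E) : ℝ :=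
  -(γ * ‖p‖ ^ 2) - c * ⟪p, q⟫ +
    ε * (‖p‖ ^ 2 - ⟪x - xstar, gradient f x⟫ - c * ⟪x - xstar, q⟫ + ⟪x - xstar, p⟫)

theorem hasDerivAt_cdLyapunov {f : E → ℝ} {xstar : E} {γ c ε : ℝ} {x p : ℝ → E} {q : E} {t : ℝ}
    (hf : DifferentiableAt ℝ f (x t)) (hx : HasDerivAt x (p t) t)
    (hp : HasDerivAt p (-gradient f (x t) - γ • p t - c • q) t) :
    HasDerivAt (fun s => cdLyapunov f xstar γ ε (x s) (p s))
      (cdLyapunovDeriv f xstar γ c ε (x t) (p t) q) t := by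
  have hfx : HasDerivAt (fun s => f (x s)) ⟪gradient f (x t), p t⟫ t := by
    rw [gradient, InnerProductSpace.toDual_symm_apply]
    exact hf.hasFDerivAt.comp_hasDerivAt t hx
  have hu := hx.sub_const xstar
  refine ((((hfx.sub_const (f xstar)).add (hp.norm_sq.div_const 2)).add
    ((hu.inner ℝ hp).const_mul ε)).add (hu.norm_sq.const_mul (ε * (γ + 1) / 2))).congr_deriv ?_
  simp only [cdLyapunovDeriv, inner_sub_right, inner_neg_right, real_inner_smul_right,
    real_inner_self_eq_norm_sq, real_inner_comm (p t)]
  ring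

theorem cdLyapunovDeriv_zero_nonpos (f : E → ℝ) (xstar x p q : E) {γ c : ℝ} (hγ : 0 ≤ γ)
    (hc : 0 ≤ c) (hq : 0 ≤ ⟪p, q⟫) : cdLyapunovDeriv f xstar γ c 0 x p q ≤ 0 := by
  unfold cdLyapunovDeriv
  nlinarith [mul_nonneg hγ (sq_nonneg ‖p‖), mul_nonneg hc hq]

theorem cdLyapunovDeriv_le {f : E → ℝ} {xstar x p q : E} {a b γ c ε M : ℝ}
    (hconv : a * (f x - f xstar) + b * ‖x - xstar‖ ^ 2 ≤ ⟪x - xstar, gradient f x⟫)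
    (hq : 0 ≤ ⟪p, q⟫) (hqM : ‖q‖ ≤ M ^ 2 * ‖p‖) (hb : 0 < b) (hc : 0 ≤ c) (hε : 0 ≤ ε)
    (hεγ : ε * (1 + (1 + c * M ^ 2) ^ 2 / (2 * b)) ≤ γ / 2) :
    cdLyapunovDeriv f xstar γ c ε x p q ≤
      -(ε * a * (f x - f xstar) + γ / 2 * ‖p‖ ^ 2 + ε * b / 2 * ‖x - xstar‖ ^ 2) := by
  set A := ‖x - xstar‖
  set P := ‖p‖
  set K := 1 + c * M ^ 2
  have hcross : ⟪x - xstar, p⟫ - c * ⟪x - xstar, q⟫ ≤ K * A * P := by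
    have hup := real_inner_le_norm (x - xstar) p
    have huq : -⟪x - xstar, q⟫ ≤ A * (M ^ 2 * P) :=
      (neg_le_abs _).trans ((abs_real_inner_le_norm _ _).trans
        (mul_le_mul_of_nonneg_left hqM (norm_nonneg _)))
    nlinarith [mul_le_mul_of_nonneg_left huq hc]
  have hyoung : K * A * P ≤ b / 2 * A ^ 2 + K ^ 2 / (2 * b) * P ^ 2 := by
    have hsq : b / 2 * A ^ 2 + K ^ 2 / (2 * b) * P ^ 2 - K * A * P =
        (b * A - K * P) ^ 2 / (2 * b) := by
      field_simp
      ring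
    nlinarith [div_nonneg (sq_nonneg (b * A - K * P)) (by positivity : (0 : ℝ) ≤ 2 * b)]
  have hbracket : ‖p‖ ^ 2 - ⟪x - xstar, gradient f x⟫ - c * ⟪x - xstar, q⟫ + ⟪x - xstar, p⟫ ≤
      -(a * (f x - f xstar)) - b / 2 * A ^ 2 + (1 + K ^ 2 / (2 * b)) * P ^ 2 := by
    nlinarith
  unfold cdLyapunovDeriv
  nlinarith [mul_le_mul_of_nonneg_left hbracket hε, mul_le_mul_of_nonneg_right hεγ (sq_nonneg P),
    mul_nonneg hc hq]

theorem cdLyapunovDeriv_add_mul_cdLyapunov_nonpos {f : E → ℝ} {xstar x p q : E}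
    {a b γ c ε κ M : ℝ} (hmin : f xstar ≤ f x)
    (hconv : a * (f x - f xstar) + b * ‖x - xstar‖ ^ 2 ≤ ⟪x - xstar, gradient f x⟫)
    (hq : 0 ≤ ⟪p, q⟫) (hqM : ‖q‖ ≤ M ^ 2 * ‖p‖) (hb : 0 < b) (hc : 0 ≤ c) (hε : 0 ≤ ε)
    (hε' : ε ≤ 1) (hεγ : ε * (1 + (1 + c * M ^ 2) ^ 2 / (2 * b)) ≤ γ / 2) (hκ : 0 ≤ κ)
    (hκa : κ ≤ ε * a) (hκγ : κ ≤ γ / 2) (hκb : κ * (γ + 2) ≤ b) :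
    cdLyapunovDeriv f xstar γ c ε x p q + κ * cdLyapunov f xstar γ ε x p ≤ 0 := by
  have hderiv := cdLyapunovDeriv_le hconv hq hqM hb hc hε hεγ
  have hupper := mul_le_mul_of_nonneg_left (cdLyapunov_le f xstar x p (γ := γ) hε hε') hκ
  have hF : κ * (f x - f xstar) ≤ ε * a * (f x - f xstar) :=
    mul_le_mul_of_nonneg_right hκa (sub_nonneg.2 hmin)
  have hP : κ * ‖p‖ ^ 2 ≤ γ / 2 * ‖p‖ ^ 2 := mul_le_mul_of_nonneg_right hκγ (sq_nonneg _)
  have hA : κ * (ε * (γ + 2) / 2) * ‖x - xstar‖ ^ 2 ≤ ε * b / 2 * ‖x - xstar‖ ^ 2 := by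
    refine mul_le_mul_of_nonneg_right ?_ (sq_nonneg _)
    nlinarith
  nlinarith

theorem norm_sq_le_two_mul_cdLyapunov_zero {f : E → ℝ} {xstar : E} {γ c : ℝ} {D : E → E}
    {x p : ℝ → E} (hf : Differentiable ℝ f) (hmin : ∀ y, f xstar ≤ f y) (hγ : 0 ≤ γ)
    (hc : 0 ≤ c) (hD : ∀ v, 0 ≤ ⟪v, D v⟫) (hx : ∀ t, 0 ≤ t → HasDerivAt x (p t) t)
    (hp : ∀ t, 0 ≤ t → HasDerivAt p (-gradient f (x t) - γ • p t - c • D (p t)) t)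
    {t : ℝ} (ht : 0 ≤ t) : ‖p t‖ ^ 2 ≤ 2 * cdLyapunov f xstar γ 0 (x 0) (p 0) := by
  have henergy := le_mul_exp_of_hasDerivAt_add_mul_nonpos (κ := 0)
    (fun s hs => hasDerivAt_cdLyapunov (xstar := xstar) (ε := 0) (hf _) (hx s hs) (hp s hs))
    (fun s _ => by simpa using cdLyapunovDeriv_zero_nonpos f xstar _ _ _ hγ hc (hD _)) ht
  simp only [cdLyapunov, zero_mul, zero_div, add_zero, neg_zero, Real.exp_zero, mul_one]
    at henergy ⊢
  linarith [hmin (x t)]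

theorem exists_cdLyapunov_le_mul_exp {f : E → ℝ} {xstar : E} {γ c a b : ℝ} {D : E → E}
    {x p : ℝ → E} (hf : Differentiable ℝ f) (hmin : ∀ y, f xstar ≤ f y) (hγ : 0 < γ)
    (hc : 0 ≤ c) (ha : 0 < a) (hb : 0 < b)
    (hconv : ∀ y, a * (f y - f xstar) + b * ‖y - xstar‖ ^ 2 ≤ ⟪y - xstar, gradient f y⟫)
    (hD : ∀ v, 0 ≤ ⟪v, D v⟫) (hD3 : ∀ v, ‖D v‖ ≤ ‖v‖ ^ 3)
    (hx : ∀ t, 0 ≤ t → HasDerivAt x (p t) t)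
    (hp : ∀ t, 0 ≤ t → HasDerivAt p (-gradient f (x t) - γ • p t - c • D (p t)) t) :
    ∃ ε κ : ℝ, 0 < ε ∧ ε ≤ 1 / 2 ∧ 0 < κ ∧ ∀ t, 0 ≤ t →
      cdLyapunov f xstar γ ε (x t) (p t) ≤
        cdLyapunov f xstar γ ε (x 0) (p 0) * Real.exp (-κ * t) := by
  set M := √(2 * cdLyapunov f xstar γ 0 (x 0) (p 0))
  have hDM : ∀ t, 0 ≤ t → ‖D (p t)‖ ≤ M ^ 2 * ‖p t‖ := fun t ht => by
    have hpM : ‖p t‖ ^ 2 ≤ M ^ 2 := by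
      have henergy := norm_sq_le_two_mul_cdLyapunov_zero hf hmin hγ.le hc hD hx hp ht
      rwa [Real.sq_sqrt ((sq_nonneg _).trans henergy)]
    calc ‖D (p t)‖ ≤ ‖p t‖ ^ 2 * ‖p t‖ := (hD3 _).trans_eq (by ring)
      _ ≤ M ^ 2 * ‖p t‖ := mul_le_mul_of_nonneg_right hpM (norm_nonneg _)
  obtain ⟨ε, κ, hε, hε2, hεγ, hκ, hκa, hκγ, hκb⟩ :=
    exists_cd_parameters hγ ha hb (K := 1 + (1 + c * M ^ 2) ^ 2 / (2 * b)) (by positivity)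
  refine ⟨ε, κ, hε, hε2, hκ, fun t ht => le_mul_exp_of_hasDerivAt_add_mul_nonpos
    (fun s hs => hasDerivAt_cdLyapunov (hf _) (hx s hs) (hp s hs))
    (fun s hs => ?_) ht⟩
  exact cdLyapunovDeriv_add_mul_cdLyapunov_nonpos (hmin _) (hconv _) (hD _) (hDM s hs) hb hc
    hε.le (by linarith) hεγ hκ.le hκa hκγ hκb

end Lyapunov

/-- Exponential convergence of the continuous cubically damped momentum (CD)
dynamics `ẋ = p`, `ṗ = -∇f(x) - γp - c[p]³`. -/
theorem cd_continuous_exponential_convergence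
    (d : ℕ) (f : EuclideanSpace ℝ (Fin d) → ℝ)
    (hf : ContDiff ℝ 2 f)
    (xstar : EuclideanSpace ℝ (Fin d)) (hmin : ∀ y, f xstar ≤ f y)
    (γ c : ℝ) (hγ : 0 < γ) (hc : 0 < c)
    (a b : ℝ) (ha : 0 < a) (hb : 0 < b)
    (hconv : ∀ x : EuclideanSpace ℝ (Fin d),
      a * (f x - f xstar) + b * ‖x - xstar‖ ^ 2 ≤
        ⟪x - xstar, gradient f x - gradient f xstar⟫)
    (x p : ℝ → EuclideanSpace ℝ (Fin d))
    (hx : ∀ t, 0 ≤ t → HasDerivAt x (p t) t)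
    (hp : ∀ t, 0 ≤ t → HasDerivAt p
      (-gradient f (x t) - γ • p t - c • cwCube (p t)) t) :
    ∃ κ : ℝ, 0 < κ ∧ ∃ C : ℝ, 0 ≤ C ∧ ∀ t : ℝ, 0 ≤ t →
      f (x t) - f xstar + ‖p t‖ ≤ C * Real.exp (-κ * t) := by
  have hgrad : gradient f xstar = 0 := by
    simp [gradient, IsLocalMin.fderiv_eq_zero (Filter.Eventually.of_forall hmin)]
  obtain ⟨ε, κ, hε, hε2, hκ, hdecay⟩ := exists_cdLyapunov_le_mul_exp
    (hf.differentiable (by norm_num)) hmin hγ hc.le ha hb (fun y => by simpa [hgrad] using hconv y)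
    real_inner_cwCube_nonneg norm_cwCube_le hx hp
  have hlower : ∀ t, f (x t) - f xstar + ‖p t‖ ^ 2 / 4 ≤ cdLyapunov f xstar γ ε (x t) (p t) :=
    fun t => add_sq_div_four_le_cdLyapunov f xstar _ _ hγ.le hε.le hε2
  refine ⟨κ / 2, by positivity, cdLyapunov f xstar γ ε (x 0) (p 0) + 1, ?_, fun t ht => ?_⟩
  · linarith [hlower 0, hmin (x 0), sq_nonneg ‖p 0‖]
  refine add_le_mul_of_add_sq_div_four_le (sub_nonneg.2 (hmin _)) (Real.exp_pos _)
    (Real.exp_le_one_iff.2 (mul_nonpos_of_nonpos_of_nonneg (by linarith) ht)) ?_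
  calc _ ≤ _ := hlower t
    _ ≤ _ := hdecay t ht
    _ = _ := by rw [← Real.exp_nat_mul]; push_cast; ring_nf
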